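/- arXiv:0708.4389 — 2 statements merged into one kernel-verified Lean document; each statement's English description precedes it below -/
import Mathlib

section
/- Define the singular words w_n by w_n = a · s_n · b^{-1} if n is odd and w_n = b · s_n · a^{-1} if n is even (that is, w_n is s_n with its last letter removed and the appropriate letter prepended), where (s_n) is a standard sequence. Then each w_n is a palindrome for all n ≥ 0. -/
/-- Letters: `a` is `false`, `b` is `true`. -/
abbrev Word := List Bool

/-- `wpow w k` is the `k`-fold concatenation `w^k`. -/
def wpow (w : Word) (k : ℕ) : Word := (List.replicate k w).flatten

/-!
For consecutive standard words `X = sₙ₋₁`, `Y = sₙ` there are a two-letter word `u` and a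
palindrome `G` (the central word) with `YX = G u` and `XY = G uᴿ` such that `XG` and `YG` are
palindromes as well, i.e. `G Xᴿ = X G` and `G Yᴿ = Y G`. The word `Yᵏ G` then has the same
properties for the pair `(Y, YᵏX)` and `uᴿ`, so the invariant passes from `(sₙ₋₁, sₙ)` to
`(sₙ, sₙ₊₁)`. It gives `sₙ₊₁ = Yᵈ⁻¹ (Y X) = (Yᵈ⁻¹ G) u` with `Yᵈ⁻¹ G` a palindrome, and `wₙ₊₁` is
this palindrome flanked by the first letter of `u`.
-/

open List

lemma wpow_succ (w : Word) (k : ℕ) : wpow w (k + 1) = w ++ wpow w k := by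
  simp [wpow, replicate_succ]

lemma wpow_reverse (w : Word) (k : ℕ) : (wpow w k).reverse = wpow w.reverse k := by
  simp [wpow, reverse_flatten]

lemma append_wpow_of_append_eq {G u v : Word} (h : G ++ u = v ++ G) (k : ℕ) :
    G ++ wpow u k = wpow v k ++ G := by
  induction k with
  | zero => simp [wpow]
  | succ k ih => rw [wpow_succ, ← append_assoc, h, append_assoc, ih, wpow_succ, append_assoc]

lemma append_wpow_comm (w : Word) (k : ℕ) : w ++ wpow w k = wpow w k ++ w :=
  append_wpow_of_append_eq rfl k

lemma append_reverse_eq_of_palindrome {G X : Word} (hG : G.Palindrome)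
    (hXG : (X ++ G).Palindrome) : G ++ X.reverse = X ++ G := by
  simpa [hG.reverse_eq] using hXG.reverse_eq

lemma palindrome_wpow_append {G Y : Word} (hG : G.Palindrome) (hYG : (Y ++ G).Palindrome)
    (k : ℕ) : (wpow Y k ++ G).Palindrome := by
  refine .of_reverse_eq ?_
  rw [reverse_append, wpow_reverse, hG.reverse_eq,
    append_wpow_of_append_eq (append_reverse_eq_of_palindrome hG hYG)]

def IsStandardPair (u X Y : Word) : Prop :=
  ∃ G : Word, G.Palindrome ∧ (X ++ G).Palindrome ∧ (Y ++ G).Palindrome ∧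
    Y ++ X = G ++ u ∧ X ++ Y = G ++ u.reverse

lemma IsStandardPair.wpow_append {u X Y : Word} (h : IsStandardPair u X Y) (k : ℕ) :
    IsStandardPair u.reverse Y (wpow Y k ++ X) := by
  obtain ⟨G, hG, hXG, hYG, hYX, hXY⟩ := h
  have hGY : G ++ wpow Y.reverse k = wpow Y k ++ G :=
    append_wpow_of_append_eq (append_reverse_eq_of_palindrome hG hYG) k
  refine ⟨wpow Y k ++ G, palindrome_wpow_append hG hYG k, ?_, ?_, ?_, ?_⟩
  · rw [← append_assoc, ← wpow_succ]
    exact palindrome_wpow_append hG hYG (k + 1)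
  · refine .of_reverse_eq ?_
    calc (wpow Y k ++ X ++ (wpow Y k ++ G)).reverse
        = (G ++ wpow Y.reverse k) ++ X.reverse ++ wpow Y.reverse k := by
          simp [wpow_reverse, hG.reverse_eq]
      _ = wpow Y k ++ (G ++ X.reverse) ++ wpow Y.reverse k := by rw [hGY]; simp
      _ = wpow Y k ++ X ++ (G ++ wpow Y.reverse k) := by
          rw [append_reverse_eq_of_palindrome hG hXG]; simp
      _ = wpow Y k ++ X ++ (wpow Y k ++ G) := by rw [hGY]
  · simp [hXY]
  · rw [reverse_reverse, ← append_assoc, append_wpow_comm, append_assoc, hYX, append_assoc]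

lemma IsStandardPair.exists_wpow_succ_append {u X Y : Word} (h : IsStandardPair u X Y)
    (k : ℕ) : ∃ P : Word, P.Palindrome ∧ wpow Y (k + 1) ++ X = P ++ u := by
  obtain ⟨G, hG, -, -, -, hXY⟩ := h.wpow_append k
  exact ⟨G, hG, by rw [wpow_succ, append_assoc, hXY, reverse_reverse]⟩

def suffixPair (n : ℤ) : Word := if Odd n then [false, true] else [true, false]

lemma suffixPair_reverse (n : ℤ) : (suffixPair n).reverse = suffixPair (n + 1) := by
  rcases Int.even_or_odd n with h | h
  · simp [suffixPair, Int.not_odd_iff_even.2 h, h.add_one]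
  · simp [suffixPair, h, Int.not_odd_iff_even.2 h.add_one]

lemma palindrome_cons_dropLast_append_suffixPair (n : ℤ) {P : Word} (hP : P.Palindrome) :
    ((if Odd n then [false] else [true]) ++ (P ++ suffixPair n).dropLast).Palindrome := by
  unfold suffixPair
  split_ifs
  · simpa [dropLast_append] using hP.cons_concat false
  · simpa [dropLast_append] using hP.cons_concat true

theorem singular_word_palindrome_general (d : ℤ → ℕ) (s : ℤ → Word)
    (hd : ∀ n : ℤ, 1 ≤ n → 1 ≤ d n)
    (hs1 : s (-1) = [true]) (hs0 : s 0 = [false])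
    (hs : ∀ n : ℤ, 1 ≤ n → s n = wpow (s (n - 1)) (d n) ++ s (n - 2))
    (w : ℤ → Word)
    (hw : ∀ n : ℤ, 0 ≤ n → w n = (if Odd n then [false] else [true]) ++ (s n).dropLast) :
    ∀ n : ℤ, 0 ≤ n → (w n).Palindrome := by
  have hs_succ (n : ℤ) (hn : 0 ≤ n) : s (n + 1) = wpow (s n) (d (n + 1)) ++ s (n - 1) := by
    rw [hs (n + 1) (by omega)]; ring_nf
  have hpair (n : ℤ) (hn : 0 ≤ n) : IsStandardPair (suffixPair (n + 1)) (s (n - 1)) (s n) := by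
    induction n, hn using Int.leInduction with
    | base =>
      exact ⟨[], .nil, by simpa [hs1] using .singleton true, by simpa [hs0] using .singleton false,
        by simp [hs0, hs1, suffixPair], by simp [hs0, hs1, suffixPair]⟩
    | succ n hn ih =>
      rw [hs_succ n hn, ← suffixPair_reverse, add_sub_cancel_right]
      exact ih.wpow_append _
  intro n hn
  rcases hn.eq_or_lt with rfl | hn
  · rw [hw 0 le_rfl, hs0]; exact .singleton true
  obtain ⟨m, hm, rfl⟩ : ∃ m : ℤ, 0 ≤ m ∧ n = m + 1 := ⟨n - 1, by omega, by ring⟩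
  obtain ⟨k, hk⟩ : ∃ k : ℕ, d (m + 1) = k + 1 :=
    ⟨d (m + 1) - 1, by have := hd (m + 1) (by omega); omega⟩
  obtain ⟨P, hP, hsP⟩ := (hpair m hm).exists_wpow_succ_append k
  rw [hw _ (by omega), hs_succ m hm, hk, hsP]
  exact palindrome_cons_dropLast_append_suffixPair _ hP

/-- Each singular word `wₙ` (`sₙ` with its last letter removed and the letter `a`
(if `n` odd) or `b` (if `n` even) prepended) is a palindrome, for all `n ≥ 0`. -/
theorem singular_word_palindrome (d : ℤ → ℕ) (s : ℤ → Word)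
    (hd : ∀ n : ℤ, 1 ≤ n → 1 ≤ d n)
    (hs1 : s (-1) = [true]) (hs0 : s 0 = [false])
    (hs : ∀ n : ℤ, 1 ≤ n → s n = wpow (s (n - 1)) (d n) ++ s (n - 2))
    (w : ℤ → Word)
    (hw : ∀ n : ℤ, 0 ≤ n → w n = (if Odd n then [false] else [true]) ++ (s n).dropLast)
    (hwm1 : w (-1) = [false]) (hwm2 : w (-2) = []) :
    ∀ n : ℤ, 0 ≤ n → (w n).Palindrome :=
  singular_word_palindrome_general d s hd hs1 hs0 hs w hw
end

section
/- Each word s_n of a standard sequence is primitive, i.e., s_n cannot be written as u^k for any word u and integer k ≥ 2. -/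
/-!
The Parikh vectors (letter counts) of `sₙ` and `sₙ₋₁` form an integer matrix of determinant `±1`,
since `sₙ₊₁ = sₙ^d sₙ₋₁` changes that pair of vectors by an elementary row operation and a swap.
Hence the two letter counts of `sₙ` are coprime, while those of `u^k` are both divisible by `k`.
-/

lemma count_wpow (u : Word) (k : ℕ) (c : Bool) : (wpow u k).count c = k * u.count c := by
  simp [wpow, List.count_flatten]

lemma eq_one_of_eq_wpow_of_coprime_count {w u : Word} {k : ℕ}
    (hw : (w.count false).Coprime (w.count true)) (hwu : w = wpow u k) : k = 1 := by
  subst hwu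
  rw [count_wpow, count_wpow] at hw
  exact (Nat.coprime_self k).mp hw.coprime_mul_right_right.coprime_mul_right

lemma IsCoprime.of_isUnit_mul_sub_mul {R : Type*} [CommRing R] {a b c e : R}
    (h : IsUnit (a * c - b * e)) : IsCoprime a b := by
  obtain ⟨v, hv⟩ := h.exists_left_inv
  exact ⟨v * c, -(v * e), by linear_combination hv⟩

def parikhDet (v w : Word) : ℤ :=
  v.count false * w.count true - v.count true * w.count false

lemma parikhDet_wpow_append_left (v w : Word) (d : ℕ) :
    parikhDet (wpow v d ++ w) v = -parikhDet v w := by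
  simp only [parikhDet, List.count_append, count_wpow]
  push_cast
  ring

lemma coprime_count_of_isUnit_parikhDet {v w : Word} (h : IsUnit (parikhDet v w)) :
    (v.count false).Coprime (v.count true) :=
  Nat.isCoprime_iff_coprime.mp (IsCoprime.of_isUnit_mul_sub_mul h)

lemma isUnit_parikhDet_standard (d : ℤ → ℕ) (s : ℤ → Word)
    (hs1 : s (-1) = [true]) (hs0 : s 0 = [false])
    (hs : ∀ n : ℤ, 1 ≤ n → s n = wpow (s (n - 1)) (d n) ++ s (n - 2)) :
    ∀ n : ℤ, 0 ≤ n → IsUnit (parikhDet (s n) (s (n - 1))) := by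
  refine Int.leInduction ?_ (fun n _ ih => ?_)
  · simp [parikhDet, hs0, hs1]
  · rw [hs (n + 1) (by omega), add_sub_cancel_right, show n + 1 - 2 = n - 1 by ring,
      parikhDet_wpow_append_left]
    exact ih.neg

theorem standard_word_primitive_general (d : ℤ → ℕ) (s : ℤ → Word)
    (hs1 : s (-1) = [true]) (hs0 : s 0 = [false])
    (hs : ∀ n : ℤ, 1 ≤ n → s n = wpow (s (n - 1)) (d n) ++ s (n - 2)) :
    ∀ n : ℤ, -1 ≤ n → ∀ (u : Word) (k : ℕ), s n = wpow u k → k = 1 := by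
  intro n hn u k hsu
  refine eq_one_of_eq_wpow_of_coprime_count ?_ hsu
  obtain rfl | hn := hn.eq_or_lt
  · simp [hs1]
  · exact coprime_count_of_isUnit_parikhDet
      (isUnit_parikhDet_standard d s hs1 hs0 hs n (by omega))

/-- Each word `sₙ` of a standard sequence is primitive: if `sₙ = u^k` then `k = 1`. -/
theorem standard_word_primitive (d : ℤ → ℕ) (s : ℤ → Word)
    (hd : ∀ n : ℤ, 1 ≤ n → 1 ≤ d n)
    (hs1 : s (-1) = [true]) (hs0 : s 0 = [false])
    (hs : ∀ n : ℤ, 1 ≤ n → s n = wpow (s (n - 1)) (d n) ++ s (n - 2)) :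
    ∀ n : ℤ, -1 ≤ n → ∀ (u : Word) (k : ℕ), s n = wpow u k → k = 1 :=
  standard_word_primitive_general d s hs1 hs0 hs
end
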